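/- Define u(x,t) = −(2√3/3) sech(2x − 8t − ln(√3/2)) and v(x,t) = −(2√6/3) sech(2x − 8t − ln(√3/2)), where sech(y) = 1/cosh(y). Then for all (x,t) ∈ ℝ², the pair (u,v) satisfies the coupled mKdV system with α = −1: u_t + u_{xxx} + 3(u_x v² + u v v_x + 2u² u_x) = 0 and v_t + v_{xxx} + 3(u² v_x + u u_x v + 2v² v_x) = 0. -/

import Mathlib

/-!
Both components are constant multiples `u = a f`, `v = b f` of the single soliton
`f = 2 sech(2x - 8t - k)` with `a² + b² = 1`. On such pairs the coupled system collapses to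
the scalar mKdV equation `f_t + f_xxx + 6 f² f_x = 0`, and for a travelling wave
`κ sech(κx - κ³t - k)` this is the derivative of the profile equation `sech'' = sech - 2 sech³`.
-/

/-- The line soliton `u(x,t) = −(2√3/3) sech(2x − 8t − ln(√3/2))`. -/
noncomputable def usol (x t : ℝ) : ℝ :=
  -(2 * Real.sqrt 3 / 3) * (1 / Real.cosh (2 * x - 8 * t - Real.log (Real.sqrt 3 / 2)))

/-- The line soliton `v(x,t) = −(2√6/3) sech(2x − 8t − ln(√3/2))`. -/
noncomputable def vsol (x t : ℝ) : ℝ :=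
  -(2 * Real.sqrt 6 / 3) * (1 / Real.cosh (2 * x - 8 * t - Real.log (Real.sqrt 3 / 2)))

open Real

noncomputable def sech (ξ : ℝ) : ℝ := 1 / cosh ξ

lemma contDiff_sech {n : WithTop ℕ∞} : ContDiff ℝ n sech :=
  contDiff_const.div contDiff_cosh fun ξ => (cosh_pos ξ).ne'

lemma hasDerivAt_sech (ξ : ℝ) : HasDerivAt sech (-(sinh ξ / cosh ξ ^ 2)) ξ := by
  rw [show sech = cosh⁻¹ from funext fun y => one_div (cosh y)]
  exact ((hasDerivAt_cosh ξ).inv (cosh_pos ξ).ne').congr_deriv (by ring)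

lemma deriv_sech : deriv sech = fun ξ => -(sinh ξ / cosh ξ ^ 2) :=
  funext fun ξ => (hasDerivAt_sech ξ).deriv

lemma deriv_deriv_sech : deriv (deriv sech) = fun ξ => sech ξ - 2 * sech ξ ^ 3 := by
  funext ξ
  have hcosh : cosh ξ ≠ 0 := (cosh_pos ξ).ne'
  have h := ((hasDerivAt_sinh ξ).fun_div ((hasDerivAt_cosh ξ).fun_pow 2)
    (pow_ne_zero 2 hcosh)).fun_neg
  rw [deriv_sech, h.deriv, sech]
  norm_num only
  field_simp
  linear_combination (-2 : ℝ) * cosh_sq_sub_sinh_sq ξ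

lemma iteratedDeriv_three_sech (ξ : ℝ) :
    iteratedDeriv 3 sech ξ = deriv sech ξ - 6 * sech ξ ^ 2 * deriv sech ξ := by
  have h := (hasDerivAt_sech ξ).fun_sub (((hasDerivAt_sech ξ).fun_pow 3).const_mul 2)
  rw [iteratedDeriv_succ', iteratedDeriv_succ', iteratedDeriv_one, deriv_deriv_sech,
    h.deriv, deriv_sech]
  ring

lemma iteratedDeriv_comp_mul_add {𝕜 : Type*} [NontriviallyNormedField 𝕜] {n : ℕ} {F : 𝕜 → 𝕜}
    (hF : ContDiff 𝕜 n F) (a b x : 𝕜) :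
    iteratedDeriv n (fun y => F (a * y + b)) x = a ^ n * iteratedDeriv n F (a * x + b) := by
  have hFb : ContDiff 𝕜 n fun z => F (z + b) := hF.comp (contDiff_id.add contDiff_const)
  rw [iteratedDeriv_comp_const_mul hFb a, iteratedDeriv_comp_add_const]

lemma deriv_comp_mul_add {𝕜 : Type*} [NontriviallyNormedField 𝕜] {F : 𝕜 → 𝕜}
    (hF : ContDiff 𝕜 1 F) (a b x : 𝕜) :
    deriv (fun y => F (a * y + b)) x = a * deriv F (a * x + b) := by
  simpa only [iteratedDeriv_one, pow_one] using iteratedDeriv_comp_mul_add hF a b x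

def IsMKdVSolution (f : ℝ → ℝ → ℝ) : Prop :=
  ∀ x t, deriv (fun s => f x s) t + iteratedDeriv 3 (fun y => f y t) x
    + 6 * f x t ^ 2 * deriv (fun y => f y t) x = 0

noncomputable def mkdvSoliton (κ k x t : ℝ) : ℝ := κ * sech (κ * x - κ ^ 3 * t - k)

theorem isMKdVSolution_mkdvSoliton (κ k : ℝ) : IsMKdVSolution (mkdvSoliton κ k) := by
  intro x t
  set ξ := κ * x - κ ^ 3 * t - k
  have hx : (fun y => mkdvSoliton κ k y t) = fun y => κ * sech (κ * y + (-(κ ^ 3 * t) - k)) := by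
    funext y; simp only [mkdvSoliton]; ring_nf
  have ht : (fun s => mkdvSoliton κ k x s) = fun s => κ * sech (-κ ^ 3 * s + (κ * x - k)) := by
    funext s; simp only [mkdvSoliton]; ring_nf
  have hξx : κ * x + (-(κ ^ 3 * t) - k) = ξ := by ring
  have hξt : -κ ^ 3 * t + (κ * x - k) = ξ := by ring
  rw [hx, ht, deriv_const_mul_field, deriv_const_mul_field, iteratedDeriv_const_mul_field,
    deriv_comp_mul_add contDiff_sech, deriv_comp_mul_add contDiff_sech,
    iteratedDeriv_comp_mul_add contDiff_sech, hξx, hξt, iteratedDeriv_three_sech]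
  simp only [mkdvSoliton]
  ring

theorem coupledMKdV_of_isMKdVSolution {f u v : ℝ → ℝ → ℝ} (hf : IsMKdVSolution f) {a b : ℝ}
    (hab : a ^ 2 + b ^ 2 = 1) (hu : ∀ x t, u x t = a * f x t) (hv : ∀ x t, v x t = b * f x t)
    (x t : ℝ) :
    (deriv (fun s => u x s) t + iteratedDeriv 3 (fun y => u y t) x
      + 3 * ((deriv (fun y => u y t) x) * (v x t) ^ 2
        + u x t * v x t * deriv (fun y => v y t) x
        + 2 * (u x t) ^ 2 * deriv (fun y => u y t) x) = 0)
    ∧ (deriv (fun s => v x s) t + iteratedDeriv 3 (fun y => v y t) x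
      + 3 * ((u x t) ^ 2 * deriv (fun y => v y t) x
        + u x t * deriv (fun y => u y t) x * v x t
        + 2 * (v x t) ^ 2 * deriv (fun y => v y t) x) = 0) := by
  obtain rfl : u = fun x t => a * f x t := funext₂ hu
  obtain rfl : v = fun x t => b * f x t := funext₂ hv
  simp only [deriv_const_mul_field, iteratedDeriv_const_mul_field]
  set fx := deriv (fun y => f y t) x
  constructor
  · linear_combination a * hf x t + 6 * a * f x t ^ 2 * fx * hab
  · linear_combination b * hf x t + 6 * b * f x t ^ 2 * fx * hab

/-- the pair `(u,v)` of line solitons satisfies the coupled mKdV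
system with `α = −1`:
`u_t + u_{xxx} + 3(u_x v² + u v v_x + 2u² u_x) = 0` and
`v_t + v_{xxx} + 3(u² v_x + u u_x v + 2v² v_x) = 0`. -/
theorem stmt14 (x t : ℝ) :
    (deriv (fun s => usol x s) t + iteratedDeriv 3 (fun y => usol y t) x
      + 3 * ((deriv (fun y => usol y t) x) * (vsol x t) ^ 2
        + usol x t * vsol x t * deriv (fun y => vsol y t) x
        + 2 * (usol x t) ^ 2 * deriv (fun y => usol y t) x) = 0)
    ∧ (deriv (fun s => vsol x s) t + iteratedDeriv 3 (fun y => vsol y t) x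
      + 3 * ((usol x t) ^ 2 * deriv (fun y => vsol y t) x
        + usol x t * deriv (fun y => usol y t) x * vsol x t
        + 2 * (vsol x t) ^ 2 * deriv (fun y => vsol y t) x) = 0) := by
  have hab : (-(√3 / 3)) ^ 2 + (-(√6 / 3)) ^ 2 = (1 : ℝ) := by
    norm_num [div_pow]
  refine coupledMKdV_of_isMKdVSolution (isMKdVSolution_mkdvSoliton 2 (log (√3 / 2))) hab
    (fun y s => ?_) (fun y s => ?_) x t
  · simp only [usol, mkdvSoliton, sech]; ring_nf
  · simp only [vsol, mkdvSoliton, sech]; ring_nf
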